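/- arXiv:2012.13430 — 2 statements merged into one kernel-verified Lean document; each statement's English description precedes it below -/
import Mathlib

section
/- If probabilities P_j(t) evolve according to the master equation dP_j/dt = Σ_k (w_{kj} P_k − w_{jk} P_j), where the transition rates are Bell's rates w_{jk} = max(0, 2·Im⟨Ψ(t)|Π_k H Π_j|Ψ(t)⟩ / ⟨Ψ(t)|Π_j|Ψ(t)⟩) (with ħ=1), the state |Ψ(t)⟩ satisfies the Schrödinger equation i d|Ψ⟩/dt = H|Ψ⟩, and {Π_j} is a complete family of orthogonal projections (Σ_j Π_j = 1, Π_jΠ_k = δ_{jk}Π_j), then the Born probabilities B_j(t) = ⟨Ψ(t)|Π_j|Ψ(t)⟩ satisfy the same master equation: dB_j/dt = Σ_k (w_{kj} B_k − w_{jk} B_j). -/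
open scoped InnerProductSpace

/-- Bell's transition rate from the subspace of projection `P` to that of `Q`,
given Hamiltonian `Ham` and universal state `ψ`:
`w = max 0 (2·Im⟨ψ|Q H P|ψ⟩ / ⟨ψ|P|ψ⟩)` (with `ħ = 1`). -/
noncomputable def bellRate {H : Type*} [NormedAddCommGroup H] [InnerProductSpace ℂ H]
    (Ham P Q : H →ₗ[ℂ] H) (ψ : H) : ℝ :=
  max 0 ((2 * (inner ℂ ψ (Q (Ham (P ψ))) : ℂ).im) / (inner ℂ ψ (P ψ) : ℂ).re)

open scoped ComplexConjugate

/-! Under `i dΨ/dt = HΨ` the Born probability `B_j = ⟨Ψ|Π_j|Ψ⟩` changes at the rate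
`2 Im⟨Ψ|Π_j H|Ψ⟩`, and inserting `1 = Σ_k Π_k` splits this into the currents
`J_{jk} = 2 Im⟨Ψ|Π_j H Π_k|Ψ⟩`, which are antisymmetric in `j, k` because `H` and the `Π`'s
are self-adjoint. Bell's rates are built so that `w_{kj} B_k = max(0, J_{jk})` and
`w_{jk} B_j = max(0, -J_{jk})`, whose difference is `J_{jk}`. -/

section

variable {E : Type*} [NormedAddCommGroup E] [InnerProductSpace ℂ E]

theorem inner_apply_apply_apply_eq_conj {A T B : E →ₗ[ℂ] E} (hA : A.IsSymmetric)
    (hT : T.IsSymmetric) (hB : B.IsSymmetric) (ψ : E) :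
    ⟪ψ, A (T (B ψ))⟫_ℂ = conj ⟪ψ, B (T (A ψ))⟫_ℂ := by
  rw [← hA, ← hT, ← hB (T (A ψ)) ψ, inner_conj_symm]

theorem im_inner_apply_apply_apply_eq_neg {A T B : E →ₗ[ℂ] E} (hA : A.IsSymmetric)
    (hT : T.IsSymmetric) (hB : B.IsSymmetric) (ψ : E) :
    (⟪ψ, A (T (B ψ))⟫_ℂ).im = -(⟪ψ, B (T (A ψ))⟫_ℂ).im := by
  rw [inner_apply_apply_apply_eq_conj hA hT hB, Complex.conj_im]

theorem bellRate_mul_re_inner_apply_self {T P Q : E →ₗ[ℂ] E} {ψ : E}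
    (hP : 0 < (⟪ψ, P ψ⟫_ℂ).re) :
    bellRate T P Q ψ * (⟪ψ, P ψ⟫_ℂ).re = max 0 (2 * (⟪ψ, Q (T (P ψ))⟫_ℂ).im) := by
  rw [bellRate, max_mul_of_nonneg _ _ hP.le, zero_mul, div_mul_cancel₀ _ hP.ne']

theorem bellRate_mul_sub_bellRate_mul {T P Q : E →ₗ[ℂ] E} (hT : T.IsSymmetric)
    (hP : P.IsSymmetric) (hQ : Q.IsSymmetric) {ψ : E}
    (hPψ : 0 < (⟪ψ, P ψ⟫_ℂ).re) (hQψ : 0 < (⟪ψ, Q ψ⟫_ℂ).re) :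
    bellRate T P Q ψ * (⟪ψ, P ψ⟫_ℂ).re - bellRate T Q P ψ * (⟪ψ, Q ψ⟫_ℂ).re
      = 2 * (⟪ψ, Q (T (P ψ))⟫_ℂ).im := by
  rw [bellRate_mul_re_inner_apply_self hPψ, bellRate_mul_re_inner_apply_self hQψ,
    im_inner_apply_apply_apply_eq_neg hP hT hQ, mul_neg, max_comm, max_comm 0,
    max_zero_sub_max_neg_zero_eq_self]

theorem re_inner_neg_I_smul_apply {P : E →ₗ[ℂ] E} (hP : P.IsSymmetric) (x ψ : E) :
    (⟪-Complex.I • x, P ψ⟫_ℂ).re = (⟪ψ, P x⟫_ℂ).im := by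
  rw [inner_smul_left, ← hP, ← inner_conj_symm (P x) ψ]
  simp only [map_neg, Complex.conj_I, neg_neg, Complex.mul_re, Complex.I_re, Complex.I_im,
    Complex.conj_re, Complex.conj_im]
  ring

theorem hasDerivAt_re_inner_apply_self [FiniteDimensional ℂ E] {P : E →ₗ[ℂ] E}
    (hP : P.IsSymmetric) {Ψ : ℝ → E} {v : E} {t : ℝ} (hΨ : HasDerivAt Ψ v t) :
    HasDerivAt (fun s => (⟪Ψ s, P (Ψ s)⟫_ℂ).re) (2 * (⟪v, P (Ψ t)⟫_ℂ).re) t := by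
  have hPΨ : HasDerivAt (fun s => P (Ψ s)) (P v) t :=
    (P.toContinuousLinearMap.restrictScalars ℝ).hasFDerivAt.comp_hasDerivAt t hΨ
  refine (Complex.reCLM.hasFDerivAt.comp_hasDerivAt t (hΨ.inner ℂ hPΨ)).congr_deriv ?_
  rw [Complex.reCLM_apply, Complex.add_re, ← hP, ← inner_conj_symm (P (Ψ t)) v, Complex.conj_re]
  ring

end

theorem born_probabilities_satisfy_bell_master_equation_general
    {H : Type*} [NormedAddCommGroup H] [InnerProductSpace ℂ H] [FiniteDimensional ℂ H]
    {n : ℕ} (Ham : H →ₗ[ℂ] H) (hHam : LinearMap.adjoint Ham = Ham)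
    (Pr : Fin n → (H →ₗ[ℂ] H))
    (hsa : ∀ j, LinearMap.adjoint (Pr j) = Pr j)
    (hsum : ∑ j, Pr j = LinearMap.id)
    (Ψ : ℝ → H)
    (hSch : ∀ t, HasDerivAt Ψ ((-Complex.I) • Ham (Ψ t)) t)
    (hpos : ∀ j t, 0 < (inner ℂ (Ψ t) (Pr j (Ψ t)) : ℂ).re) :
    ∀ (j : Fin n) (t : ℝ),
      HasDerivAt (fun s => (inner ℂ (Ψ s) (Pr j (Ψ s)) : ℂ).re)
        (∑ k, (bellRate Ham (Pr k) (Pr j) (Ψ t) * (inner ℂ (Ψ t) (Pr k (Ψ t)) : ℂ).re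
             - bellRate Ham (Pr j) (Pr k) (Ψ t) * (inner ℂ (Ψ t) (Pr j (Ψ t)) : ℂ).re)) t := by
  intro j t
  have hsym : ∀ {T : H →ₗ[ℂ] H}, T.adjoint = T → T.IsSymmetric := fun h =>
    (LinearMap.isSymmetric_iff_isSelfAdjoint _).2 (LinearMap.isSelfAdjoint_iff'.2 h)
  have hresolution : ∑ k, Pr k (Ψ t) = Ψ t := by
    rw [← LinearMap.sum_apply, hsum, LinearMap.id_apply]
  have hcurrent : ∑ k, (bellRate Ham (Pr k) (Pr j) (Ψ t) * (⟪Ψ t, Pr k (Ψ t)⟫_ℂ).re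
      - bellRate Ham (Pr j) (Pr k) (Ψ t) * (⟪Ψ t, Pr j (Ψ t)⟫_ℂ).re)
      = 2 * (⟪Ψ t, Pr j (Ham (Ψ t))⟫_ℂ).im := by
    simp only [bellRate_mul_sub_bellRate_mul (hsym hHam) (hsym (hsa _)) (hsym (hsa _))
      (hpos _ t) (hpos _ t), ← Finset.mul_sum, ← Complex.im_sum, ← inner_sum, ← map_sum,
      hresolution]
  rw [hcurrent, ← re_inner_neg_I_smul_apply (hsym (hsa j))]
  exact hasDerivAt_re_inner_apply_self (hsym (hsa j)) (hSch t)

/-- If the state `Ψ(t)` evolves unitarily under the Schrödinger equation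
`i dΨ/dt = H Ψ` and `{Π j}` is a complete family of orthogonal projections, then the Born
probabilities `B j t = ⟨Ψ(t)|Π j|Ψ(t)⟩` satisfy the master equation with Bell's rates:
`dB_j/dt = Σ_k (w_{kj} B_k − w_{jk} B_j)`. -/
theorem born_probabilities_satisfy_bell_master_equation
    {H : Type*} [NormedAddCommGroup H] [InnerProductSpace ℂ H] [FiniteDimensional ℂ H]
    {n : ℕ} (Ham : H →ₗ[ℂ] H) (hHam : LinearMap.adjoint Ham = Ham)
    (Pr : Fin n → (H →ₗ[ℂ] H))
    (hsa : ∀ j, LinearMap.adjoint (Pr j) = Pr j)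
    (horth : ∀ j k, (Pr j) ∘ₗ (Pr k) = if j = k then Pr j else 0)
    (hsum : ∑ j, Pr j = LinearMap.id)
    (Ψ : ℝ → H) (hnorm : ∀ t, ‖Ψ t‖ = 1)
    (hSch : ∀ t, HasDerivAt Ψ ((-Complex.I) • Ham (Ψ t)) t)
    (hpos : ∀ j t, 0 < (inner ℂ (Ψ t) (Pr j (Ψ t)) : ℂ).re) :
    ∀ (j : Fin n) (t : ℝ),
      HasDerivAt (fun s => (inner ℂ (Ψ s) (Pr j (Ψ s)) : ℂ).re)
        (∑ k, (bellRate Ham (Pr k) (Pr j) (Ψ t) * (inner ℂ (Ψ t) (Pr k (Ψ t)) : ℂ).re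
             - bellRate Ham (Pr j) (Pr k) (Ψ t) * (inner ℂ (Ψ t) (Pr j (Ψ t)) : ℂ).re)) t :=
  born_probabilities_satisfy_bell_master_equation_general Ham hHam Pr hsa hsum Ψ hSch hpos
end

section
/- Applying the unitary evolution steps of the Frauchiger–Renner protocol to |Ψ(3)⟩ = √(1/3)(|head⟩_{F₁C}|−⟩_{F₂S} + |tail⟩_{F₁C}|+⟩_{F₂S} + |tail⟩_{F₁C}|−⟩_{F₂S})|0⟩_{W₁}|0⟩_{W₂}, and rewriting in the bases |ok⟩ = (|head⟩−|tail⟩)/√2, |fail⟩ = (|head⟩+|tail⟩)/√2 for F₁C and |ok⟩ = (|−⟩−|+⟩)/√2, |fail⟩ = (|−⟩+|+⟩)/√2 for F₂S, yields ⟨ok|_{F₁C}⟨ok|_{F₂S}|Ψ(3)⟩ = 1/(2√3), i.e. the joint 'ok,ok' amplitude in |Ψ(3)⟩ equals √(1/12). -/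
open scoped InnerProductSpace

/-- In the Frauchiger–Renner experiment at `t = 3`, with
`|Ψ(3)⟩ = √(1/3)(|head⟩|−⟩ + |tail⟩|+⟩ + |tail⟩|−⟩)` (the `W₁`, `W₂` ready factors are
suppressed) and the bases `|ok⟩_{F₁C} = (|head⟩−|tail⟩)/√2`,
`|ok⟩_{F₂S} = (|−⟩−|+⟩)/√2`, the joint `ok, ok` amplitude equals `√(1/12)`:
`⟨ok|_{F₁C}⟨ok|_{F₂S}|Ψ(3)⟩ = 1/(2√3)`.  Here `hp, hm, tp, tm` are the four orthonormal
product vectors `|head⟩|+⟩, |head⟩|−⟩, |tail⟩|+⟩, |tail⟩|−⟩`, so that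
`|ok⟩_{F₁C}|ok⟩_{F₂S} = (1/2)(|h,−⟩ − |h,+⟩ − |t,−⟩ + |t,+⟩)`. -/
theorem FR_ok_ok_amplitude_at_t3
    {V : Type*} [NormedAddCommGroup V] [InnerProductSpace ℂ V]
    (hp hm tp tm : V)
    (hon : Orthonormal ℂ ![hp, hm, tp, tm]) :
    (inner ℂ ((1 / 2 : ℂ) • (hm - hp - tm + tp))
        (((Real.sqrt (1 / 3) : ℝ) : ℂ) • (hm + tp + tm)) : ℂ)
      = ((1 / (2 * Real.sqrt 3) : ℝ) : ℂ) := by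
  rw [orthonormal_iff_ite] at hon
  have e00 := hon 0 0
  have e01 := hon 0 1
  have e02 := hon 0 2
  have e03 := hon 0 3
  have e10 := hon 1 0
  have e11 := hon 1 1
  have e12 := hon 1 2
  have e13 := hon 1 3
  have e20 := hon 2 0
  have e21 := hon 2 1
  have e22 := hon 2 2
  have e23 := hon 2 3
  have e30 := hon 3 0
  have e31 := hon 3 1
  have e32 := hon 3 2
  have e33 := hon 3 3
  simp only [Matrix.cons_val_zero, Matrix.cons_val_one, Matrix.head_cons,
    Matrix.cons_val_fin_one, Matrix.cons_val_two, Matrix.cons_val_three,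
    Matrix.tail_cons, Fin.isValue, if_true, if_false] at *
  simp only [inner_smul_left, inner_smul_right, inner_add_left, inner_add_right,
    inner_sub_left, inner_sub_right, e00, e01, e02, e03, e10, e11, e12, e13,
    e20, e21, e22, e23, e30, e31, e32, e33]
  have h3 : Real.sqrt (1/3) = 1 / Real.sqrt 3 := by
    rw [one_div, one_div, Real.sqrt_inv]
  rw [h3]
  have hs : (Real.sqrt 3 : ℝ) ≠ 0 := by positivity
  have hs' : ((Real.sqrt 3 : ℝ) : ℂ) ≠ 0 := by exact_mod_cast hs
  push_cast
  field_simp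
  simp [map_ofNat]
end
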